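/- arXiv:1407.4868 — 2 statements merged into one kernel-verified Lean document; each statement's English description precedes it below -/
import Mathlib

section
/- For the Fock kernel P on C^n: (z_l \bar{z}_α P)(Z,Z') = ((b_α z_l)/(2π) + δ_{αl}/π + z_l \bar{z}'_α) P(Z,Z'), where b_α acts in the first variable; in particular at Z' = 0, (z_l \bar{z}_α P)(Z,0) = ((b_α z_l)/(2π) + δ_{αl}/π) P(Z,0). -/
open Complex MeasureTheory

noncomputable section

/-- Wirtinger derivative `∂/∂z_j` of a function on `ℂⁿ`. -/
def wdz {n : ℕ} (j : Fin n) (f : (Fin n → ℂ) → ℂ) : (Fin n → ℂ) → ℂ :=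
  fun z => (fderiv ℝ f z (Pi.single j 1) - Complex.I * fderiv ℝ f z (Pi.single j Complex.I)) / 2

/-- Wirtinger derivative `∂/∂z̄_j` of a function on `ℂⁿ`. -/
def wdzbar {n : ℕ} (j : Fin n) (f : (Fin n → ℂ) → ℂ) : (Fin n → ℂ) → ℂ :=
  fun z => (fderiv ℝ f z (Pi.single j 1) + Complex.I * fderiv ℝ f z (Pi.single j Complex.I)) / 2

/-- The annihilation-type operator `b_j = -2∂_{z_j} + π z̄_j`. -/
def bOp {n : ℕ} (j : Fin n) (f : (Fin n → ℂ) → ℂ) : (Fin n → ℂ) → ℂ :=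
  fun z => -2 * wdz j f z + (Real.pi : ℂ) * (starRingEnd ℂ) (z j) * f z

/-- The creation-type operator `b_j⁺ = 2∂_{z̄_j} + π z_j`. -/
def bPlusOp {n : ℕ} (j : Fin n) (f : (Fin n → ℂ) → ℂ) : (Fin n → ℂ) → ℂ :=
  fun z => 2 * wdzbar j f z + (Real.pi : ℂ) * z j * f z

/-- The Gaussian `P(z) = exp(-π|z|²/2)` on `ℂⁿ`. -/
def fockP {n : ℕ} (z : Fin n → ℂ) : ℂ :=
  Complex.exp (-((Real.pi : ℂ) / 2) * ∑ j, z j * (starRingEnd ℂ) (z j))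

/-- The model harmonic oscillator `L = Σ_l b_l b_l⁺`. -/
def LOp {n : ℕ} (f : (Fin n → ℂ) → ℂ) : (Fin n → ℂ) → ℂ :=
  fun z => ∑ l, bOp l (bPlusOp l f) z

/-- `b^α = Π_i b_i^{α_i}` (the `b_i` commute, so the order is irrelevant). -/
def bMulti {n : ℕ} (α : Fin n → ℕ) (f : (Fin n → ℂ) → ℂ) : (Fin n → ℂ) → ℂ :=
  (List.finRange n).foldr (fun i g => (bOp i)^[α i] g) f

/-- The Fock (Bergman) reproducing kernel
`P(Z,Z') = exp(-(π/2)(|z|² + |z'|² - 2Σ_l z_l z̄'_l))`. -/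
def fockK {n : ℕ} (z z' : Fin n → ℂ) : ℂ :=
  Complex.exp (-((Real.pi : ℂ) / 2) *
    ((∑ j, z j * (starRingEnd ℂ) (z j)) + (∑ j, z' j * (starRingEnd ℂ) (z' j))
      - 2 * ∑ j, z j * (starRingEnd ℂ) (z' j)))

/-! Differentiating the exponent gives `∂_{z_α} P = -(π/2) (z̄_α - 2 z̄'_α) P`, so by Leibniz
`b_α (z_l P) = (-2 δ_{αl} + 2π z_l z̄_α - 2π z_l z̄'_α) P`; the identity is this, divided by `2π`. -/

namespace FockKernel

variable {n : ℕ}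

/-- Its `ℂ`-linearity carries the calculus rules for `fderiv ℝ` over to `wdz`. -/
def wirtingerDz (j : Fin n) : ((Fin n → ℂ) →L[ℝ] ℂ) →ₗ[ℂ] ℂ where
  toFun L := (L (Pi.single j 1) - I * L (Pi.single j I)) / 2
  map_add' L M := by simp only [add_apply]; ring
  map_smul' c L := by simp only [smul_apply, smul_eq_mul, RingHom.id_apply]; ring

theorem wdz_eq_wirtingerDz_fderiv (j : Fin n) (f : (Fin n → ℂ) → ℂ) (z : Fin n → ℂ) :
    wdz j f z = wirtingerDz j (fderiv ℝ f z) :=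
  rfl

def coordCLM (k : Fin n) : (Fin n → ℂ) →L[ℝ] ℂ :=
  ContinuousLinearMap.proj k

def conjCoordCLM (k : Fin n) : (Fin n → ℂ) →L[ℝ] ℂ :=
  conjCLE.toContinuousLinearMap.comp (coordCLM k)

theorem wirtingerDz_coordCLM (j k : Fin n) :
    wirtingerDz j (coordCLM k) = if j = k then 1 else 0 := by
  by_cases h : j = k <;> simp [wirtingerDz, coordCLM, h]

theorem wirtingerDz_conjCoordCLM (j k : Fin n) : wirtingerDz j (conjCoordCLM k) = 0 := by
  by_cases h : j = k <;> simp [wirtingerDz, conjCoordCLM, coordCLM, h]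

theorem wdz_mul {f g : (Fin n → ℂ) → ℂ} {z : Fin n → ℂ} (hf : DifferentiableAt ℝ f z)
    (hg : DifferentiableAt ℝ g z) (j : Fin n) :
    wdz j (fun w => f w * g w) z = wdz j f z * g z + f z * wdz j g z := by
  simp only [wdz_eq_wirtingerDz_fderiv, fderiv_fun_mul hf hg, map_add, map_smul, smul_eq_mul]
  ring

theorem wdz_coord (j k : Fin n) (z : Fin n → ℂ) :
    wdz j (fun w => w k) z = if j = k then 1 else 0 := by
  rw [wdz_eq_wirtingerDz_fderiv, (hasFDerivAt_apply k z).fderiv]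
  exact wirtingerDz_coordCLM j k

theorem hasFDerivAt_fockK (z' z : Fin n → ℂ) :
    HasFDerivAt (fun w => fockK w z')
      (fockK z z' • (-((Real.pi : ℂ) / 2)) •
        (∑ j, (z j • conjCoordCLM j + (starRingEnd ℂ) (z j) • coordCLM j)
          - (2 : ℂ) • ∑ j, (starRingEnd ℂ) (z' j) • coordCLM j)) z := by
  have hnorm : HasFDerivAt (fun w : Fin n → ℂ => ∑ j, w j * (starRingEnd ℂ) (w j))
      (∑ j, (z j • conjCoordCLM j + (starRingEnd ℂ) (z j) • coordCLM j)) z :=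
    HasFDerivAt.fun_sum fun j _ => (coordCLM j).hasFDerivAt.mul (conjCoordCLM j).hasFDerivAt
  have hpair : HasFDerivAt (fun w : Fin n → ℂ => 2 * ∑ j, w j * (starRingEnd ℂ) (z' j))
      ((2 : ℂ) • ∑ j, (starRingEnd ℂ) (z' j) • coordCLM j) z :=
    (HasFDerivAt.fun_sum fun j _ => (coordCLM j).hasFDerivAt.mul_const _).const_mul 2
  exact (((hnorm.add_const (∑ j, z' j * (starRingEnd ℂ) (z' j))).sub hpair).const_mul
    (-((Real.pi : ℂ) / 2))).cexp

theorem wdz_fockK (j : Fin n) (z' z : Fin n → ℂ) :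
    wdz j (fun w => fockK w z') z
      = -((Real.pi : ℂ) / 2) * ((starRingEnd ℂ) (z j) - 2 * (starRingEnd ℂ) (z' j))
        * fockK z z' := by
  simp only [wdz_eq_wirtingerDz_fderiv, (hasFDerivAt_fockK z' z).fderiv, map_smul, map_sub,
    map_sum, map_add, smul_eq_mul, wirtingerDz_coordCLM, wirtingerDz_conjCoordCLM, mul_zero,
    zero_add, mul_ite, mul_one, Finset.sum_ite_eq, Finset.mem_univ, if_true]
  ring

theorem bOp_coord_mul_fockK (j k : Fin n) (z' z : Fin n → ℂ) :
    bOp j (fun w => w k * fockK w z') z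
      = (-2 * (if j = k then 1 else 0) + 2 * Real.pi * z k * (starRingEnd ℂ) (z j)
          - 2 * Real.pi * z k * (starRingEnd ℂ) (z' j)) * fockK z z' := by
  have hK : DifferentiableAt ℝ (fun w => fockK w z') z := (hasFDerivAt_fockK z' z).differentiableAt
  rw [bOp, wdz_mul (hasFDerivAt_apply k z).differentiableAt hK, wdz_coord, wdz_fockK]
  ring

end FockKernel

/-- `(z_l z̄_α P)(Z,Z') = ((b_α z_l)/(2π) + δ_{αl}/π + z_l z̄'_α) P(Z,Z')`; in particular at
`Z' = 0`, `(z_l z̄_α P)(Z,0) = ((b_α z_l)/(2π) + δ_{αl}/π) P(Z,0)`. -/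
theorem z_zbar_kernel_identity {n : ℕ} (l α : Fin n) :
    (∀ z z' : Fin n → ℂ,
        z l * (starRingEnd ℂ) (z α) * fockK z z'
          = (1 / (2 * (Real.pi : ℂ))) * bOp α (fun w => w l * fockK w z') z
            + ((if α = l then (1:ℂ) else 0) / (Real.pi : ℂ)) * fockK z z'
            + z l * (starRingEnd ℂ) (z' α) * fockK z z') ∧
    (∀ z : Fin n → ℂ,
        z l * (starRingEnd ℂ) (z α) * fockK z (0 : Fin n → ℂ)
          = (1 / (2 * (Real.pi : ℂ))) * bOp α (fun w => w l * fockK w (0 : Fin n → ℂ)) z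
            + ((if α = l then (1:ℂ) else 0) / (Real.pi : ℂ)) * fockK z (0 : Fin n → ℂ)) := by
  have hπ : (Real.pi : ℂ) ≠ 0 := ofReal_ne_zero.mpr Real.pi_ne_zero
  refine ⟨fun z z' => ?_, fun z => ?_⟩ <;>
  · simp only [FockKernel.bOp_coord_mul_fockK, Pi.zero_apply, map_zero]
    field_simp
    ring

end
end

section
/- Degree-counting inequality (Case II): Let q, j, k, r, l, l_1, i_0 ∈ N with 1 ≤ l, l_1 ≤ l, and integers r_1,…,r_k ≥ 1 with exactly l of them equal to 1 and the rest ≥ 2, Σ r_i = 2r. If q ≥ 2j - 2(k - i_0 + 1 - l_1), q ≤ 2j + 2(k - i_0 + 1 - l_1), 2j ≤ q + 2(i_0 - 1 - (l - l_1)), and 2j ≥ q - 2(i_0 - 1 - (l - l_1)), then |2j - q| + l/2 ≤ r; in particular |2j - q| < r. -/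
open Finset

/-- Degree-counting inequality (Case II): with `1 ≤ l`, `l₁ ≤ l`, all `rᵢ ≥ 1`, exactly `l`
of the `rᵢ` equal to `1` and the rest `≥ 2`, `Σ rᵢ = 2r`, and the four degree inequalities,
one gets `|2j - q| + l/2 ≤ r`; in particular `|2j - q| < r`. -/
theorem degree_counting_case_II (q j k r l l1 i0 : ℕ) (rr : Fin k → ℕ)
    (hl : 1 ≤ l) (hl1 : l1 ≤ l)
    (hr1 : ∀ i, 1 ≤ rr i)
    (hcard : (Finset.univ.filter (fun i => rr i = 1)).card = l)
    (hr2 : ∀ i, rr i = 1 ∨ 2 ≤ rr i)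
    (hsum : ∑ i, rr i = 2 * r)
    (h1 : (q : ℤ) ≥ 2 * (j : ℤ) - 2 * ((k : ℤ) - (i0 : ℤ) + 1 - (l1 : ℤ)))
    (h2 : (q : ℤ) ≤ 2 * (j : ℤ) + 2 * ((k : ℤ) - (i0 : ℤ) + 1 - (l1 : ℤ)))
    (h3 : 2 * (j : ℤ) ≤ (q : ℤ) + 2 * ((i0 : ℤ) - 1 - ((l : ℤ) - (l1 : ℤ))))
    (h4 : 2 * (j : ℤ) ≥ (q : ℤ) - 2 * ((i0 : ℤ) - 1 - ((l : ℤ) - (l1 : ℤ)))) :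
    ((|2 * (j : ℤ) - (q : ℤ)| : ℤ) : ℚ) + (l : ℚ) / 2 ≤ (r : ℚ) ∧
      |2 * (j : ℤ) - (q : ℤ)| < (r : ℤ) := by
  set s := Finset.univ.filter (fun i : Fin k => rr i = 1) with hs
  have hlk : l ≤ k := by
    rw [← hcard]
    simpa using (Finset.card_filter_le Finset.univ (fun i : Fin k => rr i = 1))
  have hsplit : (∑ i ∈ s, rr i) + ∑ i ∈ sᶜ, rr i = ∑ i, rr i :=
    Finset.sum_add_sum_compl s rr
  have hone : ∑ i ∈ s, rr i = l := by
    calc ∑ i ∈ s, rr i = ∑ _i ∈ s, 1 :=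
          Finset.sum_congr rfl fun i hi => (Finset.mem_filter.mp hi).2
      _ = s.card := by simp
      _ = l := hcard
  have hccard : sᶜ.card = k - l := by
    rw [Finset.card_compl, hcard, Fintype.card_fin]
  have htwo : (k - l) * 2 ≤ ∑ i ∈ sᶜ, rr i := by
    rw [← hccard]
    have : ∀ i ∈ sᶜ, 2 ≤ rr i := by
      intro i hi
      rcases hr2 i with h | h
      · exact absurd (Finset.mem_filter.mpr ⟨Finset.mem_univ i, h⟩)
          (Finset.mem_compl.mp hi)
      · exact h
    simpa using Finset.card_nsmul_le_sum sᶜ rr 2 this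
  have hk : 2 * k ≤ 2 * r + l := by omega
  -- abs bound
  have hA1 : |2 * (j : ℤ) - (q : ℤ)| ≤ 2 * ((k : ℤ) - (i0 : ℤ) + 1 - (l1 : ℤ)) :=
    abs_le.mpr ⟨by linarith, by linarith⟩
  have hA2 : |2 * (j : ℤ) - (q : ℤ)| ≤ 2 * ((i0 : ℤ) - 1 - ((l : ℤ) - (l1 : ℤ))) :=
    abs_le.mpr ⟨by linarith, by linarith⟩
  have hkZ : 2 * (k : ℤ) ≤ 2 * (r : ℤ) + (l : ℤ) := by exact_mod_cast hk
  have key : 2 * |2 * (j : ℤ) - (q : ℤ)| + (l : ℤ) ≤ 2 * (r : ℤ) := by linarith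
  constructor
  · have : (2 * |2 * (j : ℤ) - (q : ℤ)| + (l : ℤ) : ℚ) ≤ (2 * (r : ℤ) : ℚ) := by
      exact_mod_cast key
    push_cast at this ⊢
    linarith
  · have hlZ : (1 : ℤ) ≤ (l : ℤ) := by exact_mod_cast hl
    linarith
end
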